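/- For every (z,w) in the Cartan–Hartogs domain M_Ω(μ), the determinant of the (d+1)×(d+1) metric matrix satisfies det(g(μ)(z,w)) = N(z)^{μ(d+1)−γ} / (N(z)^μ − |w|²)^{d+2}. -/

import Mathlib

open Complex Matrix
open scoped ComplexOrder

noncomputable section

/-- Wirtinger derivative `∂f/∂z_j` of a function `f : ℂ^n → ℂ`. -/
def wD {n : ℕ} (j : Fin n) (f : (Fin n → ℂ) → ℂ) : (Fin n → ℂ) → ℂ :=
  fun p => (1 / 2 : ℂ) *
    (fderiv ℝ f p (Pi.single j 1) - Complex.I * fderiv ℝ f p (Pi.single j Complex.I))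

/-- Conjugate Wirtinger derivative `∂f/∂z̄_j` of a function `f : ℂ^n → ℂ`. -/
def wDbar {n : ℕ} (j : Fin n) (f : (Fin n → ℂ) → ℂ) : (Fin n → ℂ) → ℂ :=
  fun p => (1 / 2 : ℂ) *
    (fderiv ℝ f p (Pi.single j 1) + Complex.I * fderiv ℝ f p (Pi.single j Complex.I))

variable (d : ℕ) (μ : ℝ) (N : (Fin d → ℂ) → ℝ)

/-- `N^μ` as a complex-valued function on `ℂ^d`. -/
def NmuC : (Fin d → ℂ) → ℂ := fun z => ((N z ^ μ : ℝ) : ℂ)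

/-- The Kähler potential `Φ(z,w) = -log(N(z)^μ - |w|²)` of the Cartan–Hartogs domain,
identifying `(z,w)` with the point `p : ℂ^{d+1}`, `z = p ∘ castSucc`, `w = p (last)`. -/
def CHpot : (Fin (d + 1) → ℂ) → ℂ :=
  fun p =>
    -(((Real.log (N (fun j => p j.castSucc) ^ μ - ‖p (Fin.last d)‖ ^ 2)) : ℂ))

/-- The component `g(μ)_{αβ̄} = ∂²Φ/∂z_α∂z̄_β` of the Cartan--Hartogs metric. -/
def gCH (α β : Fin (d + 1)) : (Fin (d + 1) → ℂ) → ℂ := wD α (wDbar β (CHpot d μ N))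

/-- The matrix of the Cartan--Hartogs metric `g(μ)` at a point `p`. -/
def gCHmat (p : Fin (d + 1) → ℂ) : Matrix (Fin (d + 1)) (Fin (d + 1)) ℂ :=
  Matrix.of fun α β => gCH d μ N α β p

/-- The component `g^{Ω(μ)}_{jk̄} = -∂² log N^μ/∂z_j∂z̄_k`. -/
def gOm (j k : Fin d) : (Fin d → ℂ) → ℂ :=
  fun z => -(wD j (wDbar k fun y => ((Real.log (N y ^ μ) : ℝ) : ℂ)) z)

/-- The matrix of the metric `g^{Ω(μ)}` at a point `z ∈ Ω`. -/
def gOmMat (z : Fin d → ℂ) : Matrix (Fin d) (Fin d) ℂ :=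
  Matrix.of fun j k => gOm d μ N j k z

/-- The Ricci tensor `Ric_{αβ̄} = -∂² log det(g(μ))/∂z_α∂z̄_β` of `g(μ)`. -/
def RicCH (α β : Fin (d + 1)) : (Fin (d + 1) → ℂ) → ℂ :=
  fun p => -(wD α (wDbar β fun q => Complex.log ((gCHmat d μ N q).det)) p)

/-- The scalar curvature `κ_{g(μ)} = Σ_{α,β} g(μ)^{βᾱ} Ric_{αβ̄}` of `g(μ)`. -/
def scalCH : (Fin (d + 1) → ℂ) → ℂ :=
  fun p => ∑ α : Fin (d + 1), ∑ β : Fin (d + 1),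
    (gCHmat d μ N p)⁻¹ β α * RicCH d μ N α β p

/-- The curvature tensor
`R_{αβ̄ητ̄} = -g(μ)_{αβ̄ητ̄} + Σ_{ζ,θ} g(μ)^{ζθ̄} g(μ)_{αζ̄η} g(μ)_{θτ̄β̄}` of `g(μ)`. -/
def Rcurv (α β η τ : Fin (d + 1)) : (Fin (d + 1) → ℂ) → ℂ :=
  fun p => -(wDbar τ (wD η (gCH d μ N α β)) p) +
    ∑ ζ : Fin (d + 1), ∑ θ : Fin (d + 1),
      (gCHmat d μ N p)⁻¹ ζ θ * wD η (gCH d μ N α ζ) p * wDbar β (gCH d μ N θ τ) p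

/-- The squared norm `|R|²` of the curvature tensor of `g(μ)`. -/
def Rnorm2 : (Fin (d + 1) → ℂ) → ℂ :=
  fun p => ∑ α : Fin (d+1), ∑ β : Fin (d+1), ∑ η : Fin (d+1), ∑ θ : Fin (d+1),
    ∑ ζ : Fin (d+1), ∑ ν : Fin (d+1), ∑ ξ : Fin (d+1), ∑ τ : Fin (d+1),
      (starRingEnd ℂ) ((gCHmat d μ N p)⁻¹ α ζ) * (gCHmat d μ N p)⁻¹ β ν *
      (starRingEnd ℂ) ((gCHmat d μ N p)⁻¹ η ξ) * (gCHmat d μ N p)⁻¹ θ τ *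
      Rcurv d μ N α β η θ p * (starRingEnd ℂ) (Rcurv d μ N ζ ν ξ τ p)

/-- The squared norm `|Ric|²` of the Ricci tensor of `g(μ)`. -/
def RicNorm2 : (Fin (d + 1) → ℂ) → ℂ :=
  fun p => ∑ α : Fin (d+1), ∑ β : Fin (d+1), ∑ η : Fin (d+1), ∑ τ : Fin (d+1),
    (starRingEnd ℂ) ((gCHmat d μ N p)⁻¹ η τ) * (gCHmat d μ N p)⁻¹ α β *
    RicCH d μ N η α p * (starRingEnd ℂ) (RicCH d μ N τ β p)

/-- The Laplacian `Δκ_{g(μ)} = Σ_{α,β} g(μ)^{αβ̄} ∂²κ_{g(μ)}/∂z_α∂z̄_β`. -/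
def lapScalCH : (Fin (d + 1) → ℂ) → ℂ :=
  fun p => ∑ α : Fin (d+1), ∑ β : Fin (d+1),
    (gCHmat d μ N p)⁻¹ α β * wDbar β (wD α (scalCH d μ N)) p

/-- The Ricci tensor of `g^{Ω(μ)}`. -/
def RicOm (j k : Fin d) : (Fin d → ℂ) → ℂ :=
  fun z => -(wD j (wDbar k fun y => Complex.log ((gOmMat d μ N y).det)) z)

/-- The scalar curvature `κ_{g^{Ω(μ)}}` of `g^{Ω(μ)}`. -/
def scalOm : (Fin d → ℂ) → ℂ :=
  fun z => ∑ j : Fin d, ∑ k : Fin d, (gOmMat d μ N z)⁻¹ k j * RicOm d μ N j k z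

/-- The curvature tensor of `g^{Ω(μ)}`. -/
def RcurvOm (i j k l : Fin d) : (Fin d → ℂ) → ℂ :=
  fun z => -(wDbar l (wD k (gOm d μ N i j)) z) +
    ∑ p : Fin d, ∑ q : Fin d,
      (gOmMat d μ N z)⁻¹ p q * wD k (gOm d μ N i p) z * wDbar j (gOm d μ N q l) z

/-- The squared norm `|R_{g^{Ω(μ)}}|²` of the curvature tensor of `g^{Ω(μ)}`. -/
def Rnorm2Om : (Fin d → ℂ) → ℂ :=
  fun z => ∑ α : Fin d, ∑ β : Fin d, ∑ η : Fin d, ∑ θ : Fin d,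
    ∑ ζ : Fin d, ∑ ν : Fin d, ∑ ξ : Fin d, ∑ τ : Fin d,
      (starRingEnd ℂ) ((gOmMat d μ N z)⁻¹ α ζ) * (gOmMat d μ N z)⁻¹ β ν *
      (starRingEnd ℂ) ((gOmMat d μ N z)⁻¹ η ξ) * (gOmMat d μ N z)⁻¹ θ τ *
      RcurvOm d μ N α β η θ z * (starRingEnd ℂ) (RcurvOm d μ N ζ ν ξ τ z)

end

section Aux
open Complex

variable {n : ℕ} {f g : (Fin n → ℂ) → ℂ} {p : Fin n → ℂ}

lemma wD_apply {L : (Fin n → ℂ) →L[ℝ] ℂ} (h : HasFDerivAt f L p) (j : Fin n) :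
    wD j f p = (1/2 : ℂ) * (L (Pi.single j 1) - Complex.I * L (Pi.single j Complex.I)) := by
  simp only [wD, h.fderiv]

lemma wDbar_apply {L : (Fin n → ℂ) →L[ℝ] ℂ} (h : HasFDerivAt f L p) (j : Fin n) :
    wDbar j f p = (1/2 : ℂ) * (L (Pi.single j 1) + Complex.I * L (Pi.single j Complex.I)) := by
  simp only [wDbar, h.fderiv]

lemma wD_congr (h : f =ᶠ[nhds p] g) (j : Fin n) : wD j f p = wD j g p := by
  simp only [wD, h.fderiv_eq]

lemma wD_neg (j : Fin n) : wD j (fun x => -(f x)) p = -wD j f p := by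
  simp only [wD, fderiv_fun_neg]
  simp only [ContinuousLinearMap.neg_apply]
  ring

lemma wDbar_neg (j : Fin n) : wDbar j (fun x => -(f x)) p = -wDbar j f p := by
  simp only [wDbar, fderiv_fun_neg]
  simp only [ContinuousLinearMap.neg_apply]
  ring

lemma wD_sub (hf : DifferentiableAt ℝ f p) (hg : DifferentiableAt ℝ g p) (j : Fin n) :
    wD j (fun x => f x - g x) p = wD j f p - wD j g p := by
  rw [wD_apply (hf.hasFDerivAt.fun_sub hg.hasFDerivAt) j, wD_apply hf.hasFDerivAt j,
    wD_apply hg.hasFDerivAt j]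
  simp only [ContinuousLinearMap.sub_apply]
  ring

lemma wDbar_sub (hf : DifferentiableAt ℝ f p) (hg : DifferentiableAt ℝ g p) (j : Fin n) :
    wDbar j (fun x => f x - g x) p = wDbar j f p - wDbar j g p := by
  rw [wDbar_apply (hf.hasFDerivAt.fun_sub hg.hasFDerivAt) j, wDbar_apply hf.hasFDerivAt j,
    wDbar_apply hg.hasFDerivAt j]
  simp only [ContinuousLinearMap.sub_apply]
  ring

lemma wD_mul (hf : DifferentiableAt ℝ f p) (hg : DifferentiableAt ℝ g p) (j : Fin n) :
    wD j (fun x => f x * g x) p = wD j f p * g p + f p * wD j g p := by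
  rw [wD_apply (hf.hasFDerivAt.fun_mul hg.hasFDerivAt) j, wD_apply hf.hasFDerivAt j,
    wD_apply hg.hasFDerivAt j]
  simp only [ContinuousLinearMap.add_apply, ContinuousLinearMap.smul_apply, smul_eq_mul]
  ring

lemma wDbar_mul (hf : DifferentiableAt ℝ f p) (hg : DifferentiableAt ℝ g p) (j : Fin n) :
    wDbar j (fun x => f x * g x) p = wDbar j f p * g p + f p * wDbar j g p := by
  rw [wDbar_apply (hf.hasFDerivAt.fun_mul hg.hasFDerivAt) j, wDbar_apply hf.hasFDerivAt j,
    wDbar_apply hg.hasFDerivAt j]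
  simp only [ContinuousLinearMap.add_apply, ContinuousLinearMap.smul_apply, smul_eq_mul]
  ring

lemma wD_comp {h : ℂ → ℂ} {h' : ℂ} (hf : DifferentiableAt ℝ f p)
    (hh : HasDerivAt h h' (f p)) (j : Fin n) :
    wD j (fun x => h (f x)) p = h' * wD j f p := by
  have H : HasFDerivAt (fun x => h (f x))
      (((ContinuousLinearMap.smulRight (1 : ℂ →L[ℂ] ℂ) h').restrictScalars ℝ).comp
        (fderiv ℝ f p)) p :=
    (hh.hasFDerivAt.restrictScalars ℝ).comp p hf.hasFDerivAt
  rw [wD_apply H j, wD_apply hf.hasFDerivAt j]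
  simp only [ContinuousLinearMap.coe_comp', Function.comp_apply,
    ContinuousLinearMap.coe_restrictScalars', ContinuousLinearMap.smulRight_apply,
    ContinuousLinearMap.one_apply, smul_eq_mul]
  ring

lemma wD_inv (hg : DifferentiableAt ℝ g p) (h0 : g p ≠ 0) (j : Fin n) :
    wD j (fun x => (g x)⁻¹) p = -((g p)^2)⁻¹ * wD j g p :=
  wD_comp hg (hasDerivAt_inv h0) j

lemma diff_inv_comp (hg : DifferentiableAt ℝ g p) (h0 : g p ≠ 0) :
    DifferentiableAt ℝ (fun x => (g x)⁻¹) p :=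
  (((differentiableAt_inv (𝕜 := ℂ) h0)).restrictScalars ℝ).comp p hg

lemma wD_div (hf : DifferentiableAt ℝ f p) (hg : DifferentiableAt ℝ g p) (h0 : g p ≠ 0)
    (j : Fin n) :
    wD j (fun x => f x / g x) p = (wD j f p * g p - f p * wD j g p) / (g p)^2 := by
  simp only [div_eq_mul_inv]
  rw [wD_mul hf (diff_inv_comp hg h0) j, wD_inv hg h0 j]
  field_simp
  ring

lemma wDbar_comp_real {r : (Fin n → ℂ) → ℝ} {ψ : ℝ → ℝ} {ψ' : ℝ}
    (hr : DifferentiableAt ℝ r p) (hψ : HasDerivAt ψ ψ' (r p)) (j : Fin n) :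
    wDbar j (fun x => ((ψ (r x) : ℝ) : ℂ)) p = (ψ' : ℂ) * wDbar j (fun x => ((r x : ℝ) : ℂ)) p := by
  have h1 : HasFDerivAt (fun x => ((r x : ℝ) : ℂ)) (Complex.ofRealCLM.comp (fderiv ℝ r p)) p :=
    Complex.ofRealCLM.hasFDerivAt.comp p hr.hasFDerivAt
  have h2 : HasFDerivAt (fun x => ((ψ (r x) : ℝ) : ℂ))
      (Complex.ofRealCLM.comp ((ContinuousLinearMap.smulRight (1 : ℝ →L[ℝ] ℝ) ψ').comp
        (fderiv ℝ r p))) p :=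
    Complex.ofRealCLM.hasFDerivAt.comp p (hψ.hasFDerivAt.comp p hr.hasFDerivAt)
  rw [wDbar_apply h2 j, wDbar_apply h1 j]
  simp only [ContinuousLinearMap.coe_comp', Function.comp_apply,
    ContinuousLinearMap.smulRight_apply, ContinuousLinearMap.one_apply, smul_eq_mul,
    Complex.ofRealCLM_apply]
  push_cast
  ring

end Aux
section Aux2
open Complex

/-- The linear projection `ℂ^{d+1} → ℂ^d` forgetting the last coordinate. -/
noncomputable def frontCLM (d : ℕ) : (Fin (d+1) → ℂ) →L[ℝ] (Fin d → ℂ) :=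
  ContinuousLinearMap.pi fun j => ContinuousLinearMap.proj (Fin.castSucc j)

@[simp] lemma frontCLM_apply {d : ℕ} (p : Fin (d+1) → ℂ) (j : Fin d) :
    frontCLM d p j = p (Fin.castSucc j) := rfl

lemma frontCLM_single_castSucc {d : ℕ} (k : Fin d) (c : ℂ) :
    frontCLM d (Pi.single (Fin.castSucc k) c) = Pi.single k c := by
  funext i
  simp [Pi.single_apply, Fin.castSucc_inj]

lemma frontCLM_single_last {d : ℕ} (c : ℂ) : frontCLM d (Pi.single (Fin.last d) c) = 0 := by
  funext i
  simp [Pi.single_apply, (Fin.castSucc_lt_last i).ne]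

variable {d : ℕ} {f : (Fin d → ℂ) → ℂ} {p : Fin (d+1) → ℂ}

lemma wD_comp_front (hf : DifferentiableAt ℝ f (frontCLM d p)) (j : Fin d) :
    wD (Fin.castSucc j) (fun q => f (frontCLM d q)) p = wD j f (frontCLM d p) := by
  have H : HasFDerivAt (fun q => f (frontCLM d q))
      ((fderiv ℝ f (frontCLM d p)).comp (frontCLM d)) p :=
    hf.hasFDerivAt.comp p (frontCLM d).hasFDerivAt
  rw [wD_apply H _, wD_apply hf.hasFDerivAt j]
  simp [frontCLM_single_castSucc]

lemma wDbar_comp_front (hf : DifferentiableAt ℝ f (frontCLM d p)) (j : Fin d) :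
    wDbar (Fin.castSucc j) (fun q => f (frontCLM d q)) p = wDbar j f (frontCLM d p) := by
  have H : HasFDerivAt (fun q => f (frontCLM d q))
      ((fderiv ℝ f (frontCLM d p)).comp (frontCLM d)) p :=
    hf.hasFDerivAt.comp p (frontCLM d).hasFDerivAt
  rw [wDbar_apply H _, wDbar_apply hf.hasFDerivAt j]
  simp [frontCLM_single_castSucc]

lemma wD_last_comp_front (hf : DifferentiableAt ℝ f (frontCLM d p)) :
    wD (Fin.last d) (fun q => f (frontCLM d q)) p = 0 := by
  have H : HasFDerivAt (fun q => f (frontCLM d q))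
      ((fderiv ℝ f (frontCLM d p)).comp (frontCLM d)) p :=
    hf.hasFDerivAt.comp p (frontCLM d).hasFDerivAt
  rw [wD_apply H _]
  simp [frontCLM_single_last]

lemma wDbar_last_comp_front (hf : DifferentiableAt ℝ f (frontCLM d p)) :
    wDbar (Fin.last d) (fun q => f (frontCLM d q)) p = 0 := by
  have H : HasFDerivAt (fun q => f (frontCLM d q))
      ((fderiv ℝ f (frontCLM d p)).comp (frontCLM d)) p :=
    hf.hasFDerivAt.comp p (frontCLM d).hasFDerivAt
  rw [wDbar_apply H _]
  simp [frontCLM_single_last]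

/-- projections onto the last coordinate -/
lemma hasFDerivAt_evalLast (p : Fin (d+1) → ℂ) :
    HasFDerivAt (fun q : Fin (d+1) → ℂ => q (Fin.last d))
      (ContinuousLinearMap.proj (R := ℝ) (Fin.last d)) p := by
  have := (ContinuousLinearMap.proj (R := ℝ) (φ := fun _ : Fin (d+1) => ℂ)
    (Fin.last d)).hasFDerivAt (x := p)
  exact this

lemma diff_evalLast : DifferentiableAt ℝ (fun q : Fin (d+1) → ℂ => q (Fin.last d)) p :=
  (hasFDerivAt_evalLast p).differentiableAt

lemma wD_last_evalLast : wD (Fin.last d) (fun q : Fin (d+1) → ℂ => q (Fin.last d)) p = 1 := by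
  rw [wD_apply (hasFDerivAt_evalLast p) _]
  simp [Complex.ext_iff]
  norm_num

lemma wDbar_last_evalLast : wDbar (Fin.last d) (fun q : Fin (d+1) → ℂ => q (Fin.last d)) p = 0 := by
  rw [wDbar_apply (hasFDerivAt_evalLast p) _]
  simp [Complex.ext_iff]

lemma wD_castSucc_evalLast (j : Fin d) :
    wD (Fin.castSucc j) (fun q : Fin (d+1) → ℂ => q (Fin.last d)) p = 0 := by
  rw [wD_apply (hasFDerivAt_evalLast p) _]
  simp [Pi.single_apply, (Fin.castSucc_lt_last j).ne]

lemma wDbar_castSucc_evalLast (j : Fin d) :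
    wDbar (Fin.castSucc j) (fun q : Fin (d+1) → ℂ => q (Fin.last d)) p = 0 := by
  rw [wDbar_apply (hasFDerivAt_evalLast p) _]
  simp [Pi.single_apply, (Fin.castSucc_lt_last j).ne]

/-- conjugate of last coordinate -/
lemma hasFDerivAt_conjLast (p : Fin (d+1) → ℂ) :
    HasFDerivAt (fun q : Fin (d+1) → ℂ => (starRingEnd ℂ) (q (Fin.last d)))
      ((Complex.conjCLE.toContinuousLinearMap).comp
        (ContinuousLinearMap.proj (R := ℝ) (Fin.last d))) p := by
  have := (Complex.conjCLE.toContinuousLinearMap.comp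
    (ContinuousLinearMap.proj (R := ℝ) (φ := fun _ : Fin (d+1) => ℂ)
      (Fin.last d))).hasFDerivAt (x := p)
  exact this

lemma diff_conjLast : DifferentiableAt ℝ
    (fun q : Fin (d+1) → ℂ => (starRingEnd ℂ) (q (Fin.last d))) p :=
  (hasFDerivAt_conjLast p).differentiableAt

lemma wD_last_conjLast :
    wD (Fin.last d) (fun q : Fin (d+1) → ℂ => (starRingEnd ℂ) (q (Fin.last d))) p = 0 := by
  rw [wD_apply (hasFDerivAt_conjLast p) _]
  simp [Complex.ext_iff]

lemma wDbar_last_conjLast :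
    wDbar (Fin.last d) (fun q : Fin (d+1) → ℂ => (starRingEnd ℂ) (q (Fin.last d))) p = 1 := by
  rw [wDbar_apply (hasFDerivAt_conjLast p) _]
  simp [Complex.ext_iff]
  norm_num

lemma wD_castSucc_conjLast (j : Fin d) :
    wD (Fin.castSucc j) (fun q : Fin (d+1) → ℂ => (starRingEnd ℂ) (q (Fin.last d))) p = 0 := by
  rw [wD_apply (hasFDerivAt_conjLast p) _]
  simp [Pi.single_apply, (Fin.castSucc_lt_last j).ne]

lemma wDbar_castSucc_conjLast (j : Fin d) :
    wDbar (Fin.castSucc j) (fun q : Fin (d+1) → ℂ => (starRingEnd ℂ) (q (Fin.last d))) p = 0 := by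
  rw [wDbar_apply (hasFDerivAt_conjLast p) _]
  simp [Pi.single_apply, (Fin.castSucc_lt_last j).ne]

end Aux2
section Core
open Complex

variable {d : ℕ} {u : (Fin d → ℂ) → ℝ}

/-- differentiability of the conjugate-gradient function `wDbar k û`. -/
lemma diff_wDbar_uC {y : Fin d → ℂ} (hu : ContDiffAt ℝ (⊤ : ℕ∞) u y) (k : Fin d) :
    DifferentiableAt ℝ (wDbar k (fun y' => ((u y' : ℝ) : ℂ))) y := by
  have huC : ContDiffAt ℝ (⊤ : ℕ∞) (fun y' => ((u y' : ℝ) : ℂ)) y :=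
    (Complex.ofRealCLM.contDiff.contDiffAt).comp y hu
  have h2 : ContDiffAt ℝ 1 (fderiv ℝ (fun y' => ((u y' : ℝ) : ℂ))) y :=
    huC.fderiv_right (WithTop.coe_le_coe.mpr le_top)
  have : ContDiffAt ℝ 1 (fun p => (1 / 2 : ℂ) *
      (fderiv ℝ (fun y' => ((u y' : ℝ) : ℂ)) p (Pi.single k 1) +
        Complex.I * fderiv ℝ (fun y' => ((u y' : ℝ) : ℂ)) p (Pi.single k Complex.I))) y :=
    contDiffAt_const.mul ((h2.clm_apply contDiffAt_const).add
      (contDiffAt_const.mul (h2.clm_apply contDiffAt_const)))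
  exact this.differentiableAt one_ne_zero

lemma diff_uC {y : Fin d → ℂ} (hu : ContDiffAt ℝ (⊤ : ℕ∞) u y) :
    DifferentiableAt ℝ (fun y' => ((u y' : ℝ) : ℂ)) y :=
  ((Complex.ofRealCLM.contDiff.contDiffAt).comp y hu).differentiableAt (by simp)

lemma diff_u {y : Fin d → ℂ} (hu : ContDiffAt ℝ (⊤ : ℕ∞) u y) : DifferentiableAt ℝ u y :=
  hu.differentiableAt (by simp)

/-- The quotient formula: `∂_j ∂̄_k log u = (c F - b a)/F²`. -/
lemma wD_wDbar_log {Ω : Set (Fin d → ℂ)} (hΩ : IsOpen Ω)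
    (hu : ∀ y ∈ Ω, ContDiffAt ℝ (⊤ : ℕ∞) u y) (hupos : ∀ y ∈ Ω, 0 < u y)
    {z : Fin d → ℂ} (hz : z ∈ Ω) (j k : Fin d) :
    wD j (wDbar k (fun y => ((Real.log (u y) : ℝ) : ℂ))) z =
      (wD j (wDbar k (fun y => ((u y : ℝ) : ℂ))) z * ((u z : ℝ) : ℂ)
        - wDbar k (fun y => ((u y : ℝ) : ℂ)) z * wD j (fun y => ((u y : ℝ) : ℂ)) z)
        / ((u z : ℝ) : ℂ)^2 := by
  have hstep : ∀ y ∈ Ω, wDbar k (fun y' => ((Real.log (u y') : ℝ) : ℂ)) y =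
      wDbar k (fun y' => ((u y' : ℝ) : ℂ)) y / ((u y : ℝ) : ℂ) := by
    intro y hy
    rw [wDbar_comp_real (diff_u (hu y hy)) (Real.hasDerivAt_log (hupos y hy).ne')]
    rw [Complex.ofReal_inv]
    field_simp
  have hcong : (wDbar k (fun y' => ((Real.log (u y') : ℝ) : ℂ))) =ᶠ[nhds z]
      (fun y => wDbar k (fun y' => ((u y' : ℝ) : ℂ)) y / ((u y : ℝ) : ℂ)) := by
    filter_upwards [hΩ.mem_nhds hz] with y hy using hstep y hy
  rw [wD_congr hcong j]
  rw [wD_div (diff_wDbar_uC (hu z hz) k) (diff_uC (hu z hz))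
    (by exact_mod_cast (hupos z hz).ne') j]

end Core
section Pot
open Complex

variable {d : ℕ} {u : (Fin d → ℂ) → ℝ} {Ω : Set (Fin d → ℂ)}

/-- real defining function of the CH domain -/
noncomputable def DrF (u : (Fin d → ℂ) → ℝ) : (Fin (d+1) → ℂ) → ℝ :=
  fun q => u (frontCLM d q) - Complex.normSq (q (Fin.last d))

/-- the potential -/
noncomputable def PhiF (u : (Fin d → ℂ) → ℝ) : (Fin (d+1) → ℂ) → ℂ :=
  fun q => -(((Real.log (DrF u q)) : ℂ))

/-- complexified defining function -/
noncomputable def DCF (u : (Fin d → ℂ) → ℝ) : (Fin (d+1) → ℂ) → ℂ := fun q => ((DrF u q : ℝ) : ℂ)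

lemma DCF_split : DCF u = fun q => ((u (frontCLM d q) : ℝ) : ℂ) -
    (q (Fin.last d) * (starRingEnd ℂ) (q (Fin.last d))) := by
  funext q
  simp only [DCF, DrF]
  push_cast
  rw [Complex.mul_conj]

lemma diff_normSqC (x : ℂ) : DifferentiableAt ℝ Complex.normSq x := by
  have h : (Complex.normSq : ℂ → ℝ) = fun x => x.re * x.re + x.im * x.im := by
    funext y; exact Complex.normSq_apply y
  rw [h]
  have hre : DifferentiableAt ℝ (fun x : ℂ => x.re) x := Complex.reCLM.differentiableAt
  have him : DifferentiableAt ℝ (fun x : ℂ => x.im) x := Complex.imCLM.differentiableAt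
  exact (hre.mul hre).add (him.mul him)

lemma diff_DrF (hu : ∀ y ∈ Ω, ContDiffAt ℝ (⊤ : ℕ∞) u y) {q : Fin (d+1) → ℂ} (hq : frontCLM d q ∈ Ω) :
    DifferentiableAt ℝ (DrF u) q := by
  have h1 : DifferentiableAt ℝ (fun q' : Fin (d+1) → ℂ => u (frontCLM d q')) q :=
    (diff_u (hu _ hq)).comp q (frontCLM d).differentiableAt
  have h2 : DifferentiableAt ℝ (fun q' : Fin (d+1) → ℂ => Complex.normSq (q' (Fin.last d))) q :=
    (diff_normSqC _).comp q diff_evalLast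
  exact h1.sub h2

lemma diff_DCF (hu : ∀ y ∈ Ω, ContDiffAt ℝ (⊤ : ℕ∞) u y) {q : Fin (d+1) → ℂ} (hq : frontCLM d q ∈ Ω) :
    DifferentiableAt ℝ (DCF u) q := by
  rw [DCF_split]
  exact (((diff_uC (hu _ hq)).comp q (frontCLM d).differentiableAt)).sub
    (diff_evalLast.mul diff_conjLast)

/-- first conjugate derivatives of the potential : z-direction -/
lemma step1_cast (hu : ∀ y ∈ Ω, ContDiffAt ℝ (⊤ : ℕ∞) u y) {q : Fin (d+1) → ℂ} (hq1 : frontCLM d q ∈ Ω)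
    (hq2 : Complex.normSq (q (Fin.last d)) < u (frontCLM d q)) (k : Fin d) :
    wDbar (Fin.castSucc k) (PhiF u) q =
      -(wDbar k (fun y => ((u y : ℝ) : ℂ)) (frontCLM d q)) / DCF u q := by
  have hDr := diff_DrF hu hq1
  have hpos : 0 < DrF u q := sub_pos.mpr hq2
  have h1 : wDbar (Fin.castSucc k) (PhiF u) q =
      -((((DrF u q)⁻¹ : ℝ) : ℂ) * wDbar (Fin.castSucc k) (DCF u) q) := by
    rw [show PhiF u = fun x => -(((Real.log (DrF u x)) : ℂ)) from rfl]
    rw [wDbar_neg]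
    rw [wDbar_comp_real hDr (Real.hasDerivAt_log hpos.ne')]
    rfl
  have h2 : wDbar (Fin.castSucc k) (DCF u) q =
      wDbar k (fun y => ((u y : ℝ) : ℂ)) (frontCLM d q) := by
    rw [DCF_split]
    have hA : DifferentiableAt ℝ (fun q' : Fin (d+1) → ℂ => ((u (frontCLM d q') : ℝ) : ℂ)) q :=
      (diff_uC (hu _ hq1)).comp q (frontCLM d).differentiableAt
    rw [wDbar_sub hA (diff_evalLast.fun_mul diff_conjLast)]
    rw [wDbar_comp_front (diff_uC (hu _ hq1))]
    rw [wDbar_mul diff_evalLast diff_conjLast]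
    rw [wDbar_castSucc_evalLast, wDbar_castSucc_conjLast]
    ring
  rw [h1, h2]
  have hne : ((DrF u q : ℝ) : ℂ) ≠ 0 := by exact_mod_cast hpos.ne'
  rw [show DCF u q = ((DrF u q : ℝ) : ℂ) from rfl]
  push_cast
  field_simp

/-- first conjugate derivatives of the potential : w-direction -/
lemma step1_last (hu : ∀ y ∈ Ω, ContDiffAt ℝ (⊤ : ℕ∞) u y) {q : Fin (d+1) → ℂ} (hq1 : frontCLM d q ∈ Ω)
    (hq2 : Complex.normSq (q (Fin.last d)) < u (frontCLM d q)) :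
    wDbar (Fin.last d) (PhiF u) q = q (Fin.last d) / DCF u q := by
  have hDr := diff_DrF hu hq1
  have hpos : 0 < DrF u q := sub_pos.mpr hq2
  have h1 : wDbar (Fin.last d) (PhiF u) q =
      -((((DrF u q)⁻¹ : ℝ) : ℂ) * wDbar (Fin.last d) (DCF u) q) := by
    rw [show PhiF u = fun x => -(((Real.log (DrF u x)) : ℂ)) from rfl]
    rw [wDbar_neg]
    rw [wDbar_comp_real hDr (Real.hasDerivAt_log hpos.ne')]
    rfl
  have h2 : wDbar (Fin.last d) (DCF u) q = -(q (Fin.last d)) := by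
    rw [DCF_split]
    have hA : DifferentiableAt ℝ (fun q' : Fin (d+1) → ℂ => ((u (frontCLM d q') : ℝ) : ℂ)) q :=
      (diff_uC (hu _ hq1)).comp q (frontCLM d).differentiableAt
    rw [wDbar_sub hA (diff_evalLast.fun_mul diff_conjLast)]
    rw [wDbar_last_comp_front (diff_uC (hu _ hq1))]
    rw [wDbar_mul diff_evalLast diff_conjLast]
    rw [wDbar_last_evalLast, wDbar_last_conjLast]
    ring
  rw [h1, h2]
  have hne : ((DrF u q : ℝ) : ℂ) ≠ 0 := by exact_mod_cast hpos.ne'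
  rw [show DCF u q = ((DrF u q : ℝ) : ℂ) from rfl]
  push_cast
  field_simp

/-- z-derivatives of the complexified defining function -/
lemma wD_DCF_cast (hu : ∀ y ∈ Ω, ContDiffAt ℝ (⊤ : ℕ∞) u y) {q : Fin (d+1) → ℂ} (hq1 : frontCLM d q ∈ Ω) (j : Fin d) :
    wD (Fin.castSucc j) (DCF u) q = wD j (fun y => ((u y : ℝ) : ℂ)) (frontCLM d q) := by
  rw [DCF_split]
  have hA : DifferentiableAt ℝ (fun q' : Fin (d+1) → ℂ => ((u (frontCLM d q') : ℝ) : ℂ)) q :=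
    (diff_uC (hu _ hq1)).comp q (frontCLM d).differentiableAt
  rw [wD_sub hA (diff_evalLast.fun_mul diff_conjLast)]
  rw [wD_comp_front (diff_uC (hu _ hq1))]
  rw [wD_mul diff_evalLast diff_conjLast]
  rw [wD_castSucc_evalLast, wD_castSucc_conjLast]
  ring

lemma wD_DCF_last (hu : ∀ y ∈ Ω, ContDiffAt ℝ (⊤ : ℕ∞) u y) {q : Fin (d+1) → ℂ} (hq1 : frontCLM d q ∈ Ω) :
    wD (Fin.last d) (DCF u) q = -((starRingEnd ℂ) (q (Fin.last d))) := by
  rw [DCF_split]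
  have hA : DifferentiableAt ℝ (fun q' : Fin (d+1) → ℂ => ((u (frontCLM d q') : ℝ) : ℂ)) q :=
    (diff_uC (hu _ hq1)).comp q (frontCLM d).differentiableAt
  rw [wD_sub hA (diff_evalLast.fun_mul diff_conjLast)]
  rw [wD_last_comp_front (diff_uC (hu _ hq1))]
  rw [wD_mul diff_evalLast diff_conjLast]
  rw [wD_last_evalLast, wD_last_conjLast]
  ring

/-- the CH domain upstairs is open -/
lemma W_isOpen (hΩ : IsOpen Ω) (hucont : ContinuousOn u Ω) :
    IsOpen {q : Fin (d+1) → ℂ |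
      frontCLM d q ∈ Ω ∧ Complex.normSq (q (Fin.last d)) < u (frontCLM d q)} := by
  have hset : {q : Fin (d+1) → ℂ |
      frontCLM d q ∈ Ω ∧ Complex.normSq (q (Fin.last d)) < u (frontCLM d q)} =
      (frontCLM d ⁻¹' Ω) ∩ (DrF u ⁻¹' Set.Ioi 0) := by
    ext q
    simp only [Set.mem_setOf_eq, Set.mem_inter_iff, Set.mem_preimage, Set.mem_Ioi, DrF]
    exact and_congr_right fun _ => (sub_pos).symm
  rw [hset]
  have hpre : IsOpen (frontCLM d ⁻¹' Ω : Set (Fin (d+1) → ℂ)) :=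
    hΩ.preimage (frontCLM d).continuous
  refine ContinuousOn.isOpen_inter_preimage ?_ hpre isOpen_Ioi
  have h1 : ContinuousOn (fun q : Fin (d+1) → ℂ => u (frontCLM d q)) (frontCLM d ⁻¹' Ω) :=
    hucont.comp (frontCLM d).continuous.continuousOn fun q hq => hq
  exact h1.sub ((Complex.continuous_normSq.comp
    (continuous_apply (Fin.last d))).continuousOn)

end Pot
section Entries
open Complex

variable {d : ℕ} {u : (Fin d → ℂ) → ℝ} {Ω : Set (Fin d → ℂ)} {z : Fin d → ℂ} {w : ℂ}

lemma front_snoc (z : Fin d → ℂ) (w : ℂ) : frontCLM d (Fin.snoc z w) = z := by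
  funext j
  rw [frontCLM_apply]
  simp

lemma DrF_snoc (z : Fin d → ℂ) (w : ℂ) :
    DrF u (Fin.snoc z w) = u z - Complex.normSq w := by
  unfold DrF
  rw [front_snoc, Fin.snoc_last]

section
variable (hΩ : IsOpen Ω) (hu : ∀ y ∈ Ω, ContDiffAt ℝ (⊤ : ℕ∞) u y)
  (hz : z ∈ Ω) (hw : Complex.normSq w < u z)

omit hΩ hu hz hw

lemma hucont (hu : ∀ y ∈ Ω, ContDiffAt ℝ (⊤ : ℕ∞) u y) : ContinuousOn u Ω :=
  fun y hy => ((hu y hy).continuousAt).continuousWithinAt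

lemma mem_W (hz : z ∈ Ω) (hw : Complex.normSq w < u z) :
    (Fin.snoc z w : Fin (d+1) → ℂ) ∈ {q : Fin (d+1) → ℂ |
      frontCLM d q ∈ Ω ∧ Complex.normSq (q (Fin.last d)) < u (frontCLM d q)} := by
  constructor
  · rw [front_snoc]; exact hz
  · rw [front_snoc, Fin.snoc_last]; exact hw

lemma DCF_snoc_ne (hw : Complex.normSq w < u z) :
    DCF u (Fin.snoc z w) ≠ 0 := by
  have h : (0 : ℝ) < DrF u (Fin.snoc z w) := by rw [DrF_snoc]; linarith
  simp only [DCF]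
  exact_mod_cast h.ne'

lemma entry_cast_cast (hΩ : IsOpen Ω) (hu : ∀ y ∈ Ω, ContDiffAt ℝ (⊤ : ℕ∞) u y)
    (hz : z ∈ Ω) (hw : Complex.normSq w < u z) (j k : Fin d) :
    wD (Fin.castSucc j) (wDbar (Fin.castSucc k) (PhiF u)) (Fin.snoc z w) =
      (-(wD j (wDbar k (fun y => ((u y : ℝ) : ℂ))) z) * ((u z - Complex.normSq w : ℝ) : ℂ)
        - (-(wDbar k (fun y => ((u y : ℝ) : ℂ)) z)) * wD j (fun y => ((u y : ℝ) : ℂ)) z)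
        / ((u z - Complex.normSq w : ℝ) : ℂ)^2 := by
  have hfront := front_snoc z w
  have hmem := mem_W hz hw
  have hcong : wDbar (Fin.castSucc k) (PhiF u) =ᶠ[nhds (Fin.snoc z w : Fin (d+1) → ℂ)]
      fun q => -(wDbar k (fun y => ((u y : ℝ) : ℂ)) (frontCLM d q)) / DCF u q := by
    filter_upwards [(W_isOpen hΩ (hucont hu)).mem_nhds hmem] with q hq
      using step1_cast hu hq.1 hq.2 k
  rw [wD_congr hcong]
  have hfz : DifferentiableAt ℝ (wDbar k (fun y => ((u y : ℝ) : ℂ)))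
      (frontCLM d (Fin.snoc z w : Fin (d+1) → ℂ)) := by
    rw [hfront]; exact diff_wDbar_uC (hu z hz) k
  have hf : DifferentiableAt ℝ
      (fun q : Fin (d+1) → ℂ => -(wDbar k (fun y => ((u y : ℝ) : ℂ)) (frontCLM d q)))
      (Fin.snoc z w) :=
    (hfz.comp _ (frontCLM d).differentiableAt).neg
  have hg : DifferentiableAt ℝ (DCF u) (Fin.snoc z w : Fin (d+1) → ℂ) :=
    diff_DCF hu (by rw [hfront]; exact hz)
  rw [wD_div hf hg (DCF_snoc_ne hw)]
  rw [wD_neg, wD_comp_front hfz, wD_DCF_cast hu (by rw [hfront]; exact hz), hfront]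
  rw [show DCF u (Fin.snoc z w : Fin (d+1) → ℂ) = ((DrF u (Fin.snoc z w) : ℝ) : ℂ) from rfl,
    DrF_snoc]

lemma entry_cast_last (hΩ : IsOpen Ω) (hu : ∀ y ∈ Ω, ContDiffAt ℝ (⊤ : ℕ∞) u y)
    (hz : z ∈ Ω) (hw : Complex.normSq w < u z) (j : Fin d) :
    wD (Fin.castSucc j) (wDbar (Fin.last d) (PhiF u)) (Fin.snoc z w) =
      (0 * ((u z - Complex.normSq w : ℝ) : ℂ)
        - w * wD j (fun y => ((u y : ℝ) : ℂ)) z)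
        / ((u z - Complex.normSq w : ℝ) : ℂ)^2 := by
  have hfront := front_snoc z w
  have hmem := mem_W hz hw
  have hcong : wDbar (Fin.last d) (PhiF u) =ᶠ[nhds (Fin.snoc z w : Fin (d+1) → ℂ)]
      fun q => q (Fin.last d) / DCF u q := by
    filter_upwards [(W_isOpen hΩ (hucont hu)).mem_nhds hmem] with q hq
      using step1_last hu hq.1 hq.2
  rw [wD_congr hcong]
  have hg : DifferentiableAt ℝ (DCF u) (Fin.snoc z w : Fin (d+1) → ℂ) :=
    diff_DCF hu (by rw [hfront]; exact hz)
  rw [wD_div diff_evalLast hg (DCF_snoc_ne hw)]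
  rw [wD_castSucc_evalLast, wD_DCF_cast hu (by rw [hfront]; exact hz), hfront]
  rw [show DCF u (Fin.snoc z w : Fin (d+1) → ℂ) = ((DrF u (Fin.snoc z w) : ℝ) : ℂ) from rfl,
    DrF_snoc]
  rw [show (Fin.snoc z w : Fin (d+1) → ℂ) (Fin.last d) = w from Fin.snoc_last _ _]

lemma entry_last_cast (hΩ : IsOpen Ω) (hu : ∀ y ∈ Ω, ContDiffAt ℝ (⊤ : ℕ∞) u y)
    (hz : z ∈ Ω) (hw : Complex.normSq w < u z) (k : Fin d) :
    wD (Fin.last d) (wDbar (Fin.castSucc k) (PhiF u)) (Fin.snoc z w) =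
      (0 * ((u z - Complex.normSq w : ℝ) : ℂ)
        - (-(wDbar k (fun y => ((u y : ℝ) : ℂ)) z)) * (-((starRingEnd ℂ) w)))
        / ((u z - Complex.normSq w : ℝ) : ℂ)^2 := by
  have hfront := front_snoc z w
  have hmem := mem_W hz hw
  have hcong : wDbar (Fin.castSucc k) (PhiF u) =ᶠ[nhds (Fin.snoc z w : Fin (d+1) → ℂ)]
      fun q => -(wDbar k (fun y => ((u y : ℝ) : ℂ)) (frontCLM d q)) / DCF u q := by
    filter_upwards [(W_isOpen hΩ (hucont hu)).mem_nhds hmem] with q hq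
      using step1_cast hu hq.1 hq.2 k
  rw [wD_congr hcong]
  have hfz : DifferentiableAt ℝ (wDbar k (fun y => ((u y : ℝ) : ℂ)))
      (frontCLM d (Fin.snoc z w : Fin (d+1) → ℂ)) := by
    rw [hfront]; exact diff_wDbar_uC (hu z hz) k
  have hf : DifferentiableAt ℝ
      (fun q : Fin (d+1) → ℂ => -(wDbar k (fun y => ((u y : ℝ) : ℂ)) (frontCLM d q)))
      (Fin.snoc z w) :=
    (hfz.comp _ (frontCLM d).differentiableAt).neg
  have hg : DifferentiableAt ℝ (DCF u) (Fin.snoc z w : Fin (d+1) → ℂ) :=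
    diff_DCF hu (by rw [hfront]; exact hz)
  rw [wD_div hf hg (DCF_snoc_ne hw)]
  rw [wD_neg, wD_last_comp_front hfz, wD_DCF_last hu (by rw [hfront]; exact hz), hfront]
  rw [show DCF u (Fin.snoc z w : Fin (d+1) → ℂ) = ((DrF u (Fin.snoc z w) : ℝ) : ℂ) from rfl,
    DrF_snoc]
  rw [show (Fin.snoc z w : Fin (d+1) → ℂ) (Fin.last d) = w from Fin.snoc_last _ _]
  ring_nf

lemma entry_last_last (hΩ : IsOpen Ω) (hu : ∀ y ∈ Ω, ContDiffAt ℝ (⊤ : ℕ∞) u y)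
    (hz : z ∈ Ω) (hw : Complex.normSq w < u z) :
    wD (Fin.last d) (wDbar (Fin.last d) (PhiF u)) (Fin.snoc z w) =
      (1 * ((u z - Complex.normSq w : ℝ) : ℂ)
        - w * (-((starRingEnd ℂ) w)))
        / ((u z - Complex.normSq w : ℝ) : ℂ)^2 := by
  have hfront := front_snoc z w
  have hmem := mem_W hz hw
  have hcong : wDbar (Fin.last d) (PhiF u) =ᶠ[nhds (Fin.snoc z w : Fin (d+1) → ℂ)]
      fun q => q (Fin.last d) / DCF u q := by
    filter_upwards [(W_isOpen hΩ (hucont hu)).mem_nhds hmem] with q hq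
      using step1_last hu hq.1 hq.2
  rw [wD_congr hcong]
  have hg : DifferentiableAt ℝ (DCF u) (Fin.snoc z w : Fin (d+1) → ℂ) :=
    diff_DCF hu (by rw [hfront]; exact hz)
  rw [wD_div diff_evalLast hg (DCF_snoc_ne hw)]
  rw [wD_last_evalLast, wD_DCF_last hu (by rw [hfront]; exact hz)]
  rw [show DCF u (Fin.snoc z w : Fin (d+1) → ℂ) = ((DrF u (Fin.snoc z w) : ℝ) : ℂ) from rfl,
    DrF_snoc]
  rw [show (Fin.snoc z w : Fin (d+1) → ℂ) (Fin.last d) = w from Fin.snoc_last _ _]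

end
end Entries

/-- determinant of the Cartan–Hartogs metric matrix. -/
theorem det_gCH (d : ℕ) (hd : 1 ≤ d) (γ μ : ℝ) (hγ : 0 < γ) (hμ : 0 < μ)
    (Ω : Set (Fin d → ℂ)) (hΩopen : IsOpen Ω) (hΩconn : IsPreconnected Ω)
    (N : (Fin d → ℂ) → ℝ) (hNsm : ContDiffOn ℝ (⊤ : ℕ∞) N Ω) (hNpos : ∀ z ∈ Ω, 0 < N z)
    (hMA : ∀ z ∈ Ω, (gOmMat d μ N z).det = ((N z ^ (-γ) : ℝ) : ℂ))
    (z : Fin d → ℂ) (w : ℂ) (hz : z ∈ Ω) (hw : ‖w‖ ^ 2 < N z ^ μ) :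
    (gCHmat d μ N (Fin.snoc z w)).det =
      ((N z ^ (μ * (d + 1 : ℝ) - γ) / (N z ^ μ - ‖w‖ ^ 2) ^ (d + 2) : ℝ) : ℂ) := by
  rw [Complex.sq_norm] at hw ⊢
  -- basic positivity
  have hNz : 0 < N z := hNpos z hz
  have hFpos : (0:ℝ) < N z ^ μ := Real.rpow_pos_of_pos hNz μ
  have hXpos : (0:ℝ) < N z ^ μ - Complex.normSq w := by linarith
  -- smoothness of u := N ^ μ
  have hu : ∀ y ∈ Ω, ContDiffAt ℝ (⊤ : ℕ∞) (fun y' => N y' ^ μ) y := fun y hy =>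
    ((hNsm.contDiffAt (hΩopen.mem_nhds hy)).rpow_const_of_ne (hNpos y hy).ne')
  have hupos : ∀ y ∈ Ω, 0 < (fun y' => N y' ^ μ) y := fun y hy =>
    Real.rpow_pos_of_pos (hNpos y hy) μ
  have hw' : Complex.normSq w < (fun y' => N y' ^ μ) z := hw
  -- the potential identification
  have hPhi : CHpot d μ N = PhiF (fun y => N y ^ μ) := by
    funext q
    have hfq : (fun j => q j.castSucc) = frontCLM d q := by
      funext i; rw [frontCLM_apply]
    simp only [CHpot, PhiF, DrF, ← hfq, Complex.sq_norm]
  -- abbreviations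
  set X : ℝ := N z ^ μ - Complex.normSq w with hX
  set F : ℂ := ((N z ^ μ : ℝ) : ℂ) with hF
  set Dn : ℂ := ((X : ℝ) : ℂ) with hDnd
  set a : Fin d → ℂ := fun j => wD j (fun y => ((N y ^ μ : ℝ) : ℂ)) z with ha
  set b : Fin d → ℂ := fun k => wDbar k (fun y => ((N y ^ μ : ℝ) : ℂ)) z with hb
  set c : Fin d → Fin d → ℂ :=
    fun j k => wD j (wDbar k (fun y => ((N y ^ μ : ℝ) : ℂ))) z with hc
  have hFne : F ≠ 0 := by rw [hF]; exact_mod_cast hFpos.ne'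
  have hDnne : Dn ≠ 0 := by rw [hDnd]; exact_mod_cast hXpos.ne'
  have hrel : w * (starRingEnd ℂ) w = F - Dn := by
    rw [Complex.mul_conj, hF, hDnd, hX]; push_cast; ring
  -- matrix blocks
  set A : Matrix (Fin d) (Fin d) ℂ :=
    Matrix.of (fun j k => (-(c j k) * Dn - (-(b k)) * (a j)) / Dn^2) with hAdef
  set B1 : Matrix (Fin d) (Fin 1) ℂ :=
    Matrix.of (fun j _ => (0 * Dn - w * a j) / Dn^2) with hB1def
  set C1 : Matrix (Fin 1) (Fin d) ℂ :=
    Matrix.of (fun _ k => (0 * Dn - (-(b k)) * (-((starRingEnd ℂ) w))) / Dn^2) with hC1def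
  set D1 : Matrix (Fin 1) (Fin 1) ℂ :=
    Matrix.of (fun _ _ => (1 * Dn - w * (-((starRingEnd ℂ) w))) / Dn^2) with hD1def
  -- entries
  have E11 : ∀ j k : Fin d,
      wD (Fin.castSucc j) (wDbar (Fin.castSucc k) (PhiF (fun y => N y ^ μ))) (Fin.snoc z w) =
        (-(c j k) * Dn - (-(b k)) * (a j)) / Dn^2 := fun j k =>
    entry_cast_cast hΩopen hu hz hw' j k
  have E12 : ∀ j : Fin d,
      wD (Fin.castSucc j) (wDbar (Fin.last d) (PhiF (fun y => N y ^ μ))) (Fin.snoc z w) =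
        (0 * Dn - w * a j) / Dn^2 := fun j =>
    entry_cast_last hΩopen hu hz hw' j
  have E21 : ∀ k : Fin d,
      wD (Fin.last d) (wDbar (Fin.castSucc k) (PhiF (fun y => N y ^ μ))) (Fin.snoc z w) =
        (0 * Dn - (-(b k)) * (-((starRingEnd ℂ) w))) / Dn^2 := fun k =>
    entry_last_cast hΩopen hu hz hw' k
  have E22 :
      wD (Fin.last d) (wDbar (Fin.last d) (PhiF (fun y => N y ^ μ))) (Fin.snoc z w) =
        (1 * Dn - w * (-((starRingEnd ℂ) w))) / Dn^2 :=
    entry_last_last hΩopen hu hz hw'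
  -- block decomposition
  have hsub : (gCHmat d μ N (Fin.snoc z w)).submatrix finSumFinEquiv finSumFinEquiv
      = Matrix.fromBlocks A B1 C1 D1 := by
    apply Matrix.ext
    rintro (j | i) (k | i')
    · show wD (Fin.castSucc j) (wDbar (Fin.castSucc k) (CHpot d μ N)) (Fin.snoc z w) = A j k
      rw [hPhi]; exact E11 j k
    · fin_cases i'
      show wD (Fin.castSucc j) (wDbar (Fin.last d) (CHpot d μ N)) (Fin.snoc z w) =
        (0 * Dn - w * a j) / Dn^2
      rw [hPhi]; exact E12 j
    · fin_cases i
      show wD (Fin.last d) (wDbar (Fin.castSucc k) (CHpot d μ N)) (Fin.snoc z w) =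
        (0 * Dn - (-(b k)) * (-((starRingEnd ℂ) w))) / Dn^2
      rw [hPhi]; exact E21 k
    · fin_cases i; fin_cases i'
      show wD (Fin.last d) (wDbar (Fin.last d) (CHpot d μ N)) (Fin.snoc z w) =
        (1 * Dn - w * (-((starRingEnd ℂ) w))) / Dn^2
      rw [hPhi]; exact E22
  -- invertibility of the 1×1 block
  have hD1entry : (1 * Dn - w * (-((starRingEnd ℂ) w))) / Dn^2 = F / Dn^2 := by
    rw [show 1 * Dn - w * (-((starRingEnd ℂ) w)) = Dn + w * (starRingEnd ℂ) w by ring, hrel]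
    ring_nf
  haveI hiv : Invertible D1 := by
    apply Matrix.invertibleOfIsUnitDet
    rw [Matrix.det_fin_one]
    show IsUnit ((1 * Dn - w * (-((starRingEnd ℂ) w))) / Dn^2)
    rw [hD1entry]
    exact isUnit_iff_ne_zero.mpr (div_ne_zero hFne (pow_ne_zero 2 hDnne))
  have hinv : ⅟D1 = Matrix.of (fun _ _ : Fin 1 => Dn^2 / F) := by
    apply invOf_eq_right_inv
    apply Matrix.ext; intro i k
    have hik : i = k := Subsingleton.elim i k
    subst hik
    rw [Matrix.mul_apply, Fin.sum_univ_one, Matrix.one_apply_eq]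
    show (1 * Dn - w * (-((starRingEnd ℂ) w))) / Dn^2 * (Dn^2 / F) = 1
    rw [hD1entry]
    field_simp
  -- the Monge–Ampère side
  have hlog : ∀ j k : Fin d,
      wD j (wDbar k (fun y => ((Real.log (N y ^ μ) : ℝ) : ℂ))) z =
        (c j k * F - b k * a j) / F^2 := fun j k =>
    wD_wDbar_log hΩopen hu hupos hz j k
  have hgOmv : ∀ j k : Fin d,
      gOmMat d μ N z j k = -((c j k * F - b k * a j) / F^2) := by
    intro j k
    show -(wD j (wDbar k (fun y => ((Real.log (N y ^ μ) : ℝ) : ℂ))) z) = _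
    rw [hlog j k]
  -- Schur complement
  have hschur : A - B1 * ⅟D1 * C1 = (F / Dn) • gOmMat d μ N z := by
    rw [hinv]
    apply Matrix.ext; intro j k
    have h0 : (A - B1 * Matrix.of (fun _ _ : Fin 1 => Dn^2 / F) * C1) j k
        = A j k - B1 j 0 * (Dn^2 / F) * C1 0 k := by
      simp [Matrix.sub_apply, Matrix.mul_apply, Fin.sum_univ_one]
    rw [h0]
    rw [show ((F / Dn) • gOmMat d μ N z) j k = (F / Dn) * gOmMat d μ N z j k from rfl]
    rw [hgOmv j k]
    show (-(c j k) * Dn - (-(b k)) * (a j)) / Dn^2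
        - (0 * Dn - w * a j) / Dn^2 * (Dn^2 / F)
          * ((0 * Dn - (-(b k)) * (-((starRingEnd ℂ) w))) / Dn^2)
        = (F / Dn) * -((c j k * F - b k * a j) / F^2)
    field_simp
    linear_combination (-(a j * b k)) * hrel
  -- determinant computation
  have hdet : (gCHmat d μ N (Fin.snoc z w)).det
      = D1.det * ((F / Dn) • gOmMat d μ N z).det := by
    rw [← Matrix.det_submatrix_equiv_self finSumFinEquiv, hsub,
      Matrix.det_fromBlocks₂₂, hschur]
  have hD1det : D1.det = F / Dn^2 := by
    rw [Matrix.det_fin_one]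
    show (1 * Dn - w * (-((starRingEnd ℂ) w))) / Dn^2 = F / Dn^2
    exact hD1entry
  rw [hdet, hD1det, Matrix.det_smul, Fintype.card_fin, hMA z hz]
  -- final scalar computation
  have hgoal : (N z ^ μ / X ^ 2) * ((N z ^ μ / X) ^ d * N z ^ (-γ))
      = N z ^ (μ * (d + 1 : ℝ) - γ) / X ^ (d + 2) := by
    have h1 : N z ^ (μ * ((d : ℝ) + 1) - γ) = (N z ^ μ) ^ (d + 1 : ℕ) * N z ^ (-γ) := by
      rw [show μ * ((d : ℝ) + 1) - γ = μ * ((d : ℝ) + 1) + (-γ) by ring,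
        Real.rpow_add hNz, Real.rpow_mul hNz.le,
        show ((d : ℝ) + 1) = ((d + 1 : ℕ) : ℝ) by push_cast; ring,
        Real.rpow_natCast]
    rw [h1, div_pow]
    field_simp
    ring
  rw [hF, hDnd]
  exact_mod_cast hgoal
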